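/- arXiv:2303.15020 — 3 statements merged into one kernel-verified Lean document; each statement's English description precedes it below -/
import Mathlib

section
/- Splitting of small-step continuous transitions: if the HCSP process c in state s makes a small-step transition with wait event ⟨d, p, rdy⟩ to process c' and state s', and 0 < d' < d, then there exist c'' and s'' such that c in state s makes a small-step transition with wait event ⟨d', p, rdy⟩ to (c'', s''), and c'' in state s'' makes a small-step transition with wait event ⟨d−d', p(·+d'), rdy⟩ to (c', s'). -/
set_option autoImplicit true

/-- A state of a sequential process: a valuation of program variables. -/
abbrev SState := String → ℝ

/-- States of (possibly parallel) processes: a state of a parallel process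
`pc1 ∥_cs pc2` is the pair (disjoint union) of the states of its components. -/
inductive PState : Type
  | base (s : SState)
  | pair (a b : PState)

/-- Channel directions appearing in ready sets. -/
inductive RdyEv : Type
  | rin  (ch : String)
  | rout (ch : String)

def compat (rdy1 rdy2 : Set RdyEv) : Prop :=
  ¬ ∃ ch : String,
      (RdyEv.rin ch ∈ rdy1 ∧ RdyEv.rout ch ∈ rdy2) ∨
      (RdyEv.rout ch ∈ rdy1 ∧ RdyEv.rin ch ∈ rdy2)

/-- Direction tags of communication events. -/
inductive Dir : Type
  | inp | outp | io

/-- Generalized events: communication events `⟨ch▷, v⟩`, wait events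
`⟨d, p, rdy⟩`, infinite wait events `⟨∞, p, rdy⟩`, and the deadlock `δ`. -/
inductive Ev : Type
  | comm (ch : String) (dir : Dir) (v : ℝ)
  | wait (d : ℝ) (p : ℝ → PState) (rdy : Set RdyEv)
  | waitInf (p : ℝ → PState) (rdy : Set RdyEv)
  | delta

/-- A communication occurring in an interrupt: input `ch?x` or output `ch!e`. -/
inductive CommDir : Type
  | recv (ch : String) (x : String)
  | send (ch : String) (e : SState → ℝ)

/-- HCSP processes. -/
inductive SProc : Type
  | skip
  | assign (x : String) (e : SState → ℝ)
  | input (ch : String) (x : String)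
  | output (ch : String) (e : SState → ℝ)
  | ichoice (c1 c2 : SProc)
  | seq (c1 c2 : SProc)
  | star (c : SProc)
  | cond (b : SState → Prop) (c1 c2 : SProc)
  | ode (f : SState → String → ℝ) (B : SState → Prop)
  | interrupt (f : SState → String → ℝ) (B : SState → Prop)
      (comms : List (CommDir × SProc))
  | par (c1 c2 : SProc) (cs : Set String)

/-- Update a state at one variable. -/
def update (s : SState) (x : String) (v : ℝ) : SState :=
  fun y => if y = x then v else s y

/-- `p` is a solution of the ODE whose vector field is `f`. -/
def Solution (f : SState → String → ℝ) (p : ℝ → SState) : Prop :=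
  ∀ x t, HasDerivAt (fun τ => p τ x) (f (p t) x) t

/-- Ready set of an interrupt: the channel directions of its communications. -/
def rdyOf (comms : List (CommDir × SProc)) : Set RdyEv :=
  { r | ∃ pr ∈ comms,
      (∃ ch x, pr.1 = CommDir.recv ch x ∧ r = RdyEv.rin ch) ∨
      (∃ ch e, pr.1 = CommDir.send ch e ∧ r = RdyEv.rout ch) }

/-- Small-step operational semantics `(c, s) →ᵉ (c', s')`; the event is
`none` for internal (τ) steps. -/
inductive Step : SProc → PState → Option Ev → SProc → PState → Prop
  | assignS {x e s} :
      Step (.assign x e) (.base s) none .skip (.base (update s x (e s)))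
  | seqS1 {c1 c2 s ev c1' s'} : Step c1 s ev c1' s' →
      Step (.seq c1 c2) s ev (.seq c1' c2) s'
  | seqS2 {c s} : Step (.seq .skip c) s none c s
  | condS1 {b c1 c2 s} : b s →
      Step (.cond b c1 c2) (.base s) none c1 (.base s)
  | condS2 {b c1 c2 s} : ¬ b s →
      Step (.cond b c1 c2) (.base s) none c2 (.base s)
  | outS1 {ch e s} :
      Step (.output ch e) (.base s) (some (.comm ch .outp (e s))) .skip (.base s)
  | outS2 {ch e s d} : 0 < d →
      Step (.output ch e) (.base s)
        (some (.wait d (fun _ => .base s) {RdyEv.rout ch})) (.output ch e) (.base s)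
  | outS3 {ch e s} :
      Step (.output ch e) (.base s)
        (some (.waitInf (fun _ => .base s) {RdyEv.rout ch})) .skip (.base s)
  | inS1 {ch x s v} :
      Step (.input ch x) (.base s) (some (.comm ch .inp v)) .skip (.base (update s x v))
  | inS2 {ch x s d} : 0 < d →
      Step (.input ch x) (.base s)
        (some (.wait d (fun _ => .base s) {RdyEv.rin ch})) (.input ch x) (.base s)
  | inS3 {ch x s} :
      Step (.input ch x) (.base s)
        (some (.waitInf (fun _ => .base s) {RdyEv.rin ch})) .skip (.base s)
  | repS1 {c s} : Step (.star c) s none .skip s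
  | repS2 {c s ev c' s'} : Step c s ev c' s' →
      Step (.star c) s ev (.seq c' (.star c)) s'
  | ichoiceS1 {c1 c2 s} : Step (.ichoice c1 c2) s none c1 s
  | ichoiceS2 {c1 c2 s} : Step (.ichoice c1 c2) s none c2 s
  | contS1 {f B s} : ¬ B s →
      Step (.ode f B) (.base s) none .skip (.base s)
  | contS2 {f B s p d} : Solution f p → p 0 = s → 0 < d →
      (∀ t, 0 ≤ t → t < d → B (p t)) →
      Step (.ode f B) (.base s)
        (some (.wait d (fun t => .base (p t)) ∅)) (.ode f B) (.base (p d))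
  | intS1 {f B comms s p d} : Solution f p → p 0 = s → 0 < d →
      (∀ t, 0 ≤ t → t < d → B (p t)) →
      Step (.interrupt f B comms) (.base s)
        (some (.wait d (fun t => .base (p t)) (rdyOf comms)))
        (.interrupt f B comms) (.base (p d))
  | intS2 {f B comms s} : ¬ B s →
      Step (.interrupt f B comms) (.base s) none .skip (.base s)
  | intS3 {f B comms s ch e ci} : (CommDir.send ch e, ci) ∈ comms →
      Step (.interrupt f B comms) (.base s)
        (some (.comm ch .outp (e s))) ci (.base s)
  | intS4 {f B comms s ch x ci v} : (CommDir.recv ch x, ci) ∈ comms →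
      Step (.interrupt f B comms) (.base s)
        (some (.comm ch .inp v)) ci (.base (update s x v))
  | parTauL {c1 c2 cs s1 s2 c1' s1'} : Step c1 s1 none c1' s1' →
      Step (.par c1 c2 cs) (.pair s1 s2) none (.par c1' c2 cs) (.pair s1' s2)
  | parTauR {c1 c2 cs s1 s2 c2' s2'} : Step c2 s2 none c2' s2' →
      Step (.par c1 c2 cs) (.pair s1 s2) none (.par c1 c2' cs) (.pair s1 s2')
  | parDelayS {c1 c2 cs s1 s2 c1' c2' s1' s2' d p1 p2 rdy1 rdy2} :
      compat rdy1 rdy2 →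
      Step c1 s1 (some (.wait d p1 rdy1)) c1' s1' →
      Step c2 s2 (some (.wait d p2 rdy2)) c2' s2' →
      Step (.par c1 c2 cs) (.pair s1 s2)
        (some (.wait d (fun t => .pair (p1 t) (p2 t)) (rdy1 ∪ rdy2)))
        (.par c1' c2' cs) (.pair s1' s2')
  | parPairS1 {c1 c2 cs s1 s2 c1' c2' s1' s2' ch v} : ch ∈ cs →
      Step c1 s1 (some (.comm ch .outp v)) c1' s1' →
      Step c2 s2 (some (.comm ch .inp v)) c2' s2' →
      Step (.par c1 c2 cs) (.pair s1 s2) (some (.comm ch .io v))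
        (.par c1' c2' cs) (.pair s1' s2')
  | parPairS2 {c1 c2 cs s1 s2 c1' c2' s1' s2' ch v} : ch ∈ cs →
      Step c1 s1 (some (.comm ch .inp v)) c1' s1' →
      Step c2 s2 (some (.comm ch .outp v)) c2' s2' →
      Step (.par c1 c2 cs) (.pair s1 s2) (some (.comm ch .io v))
        (.par c1' c2' cs) (.pair s1' s2')
  | parUnpairS1 {c1 c2 cs s1 s2 c1' s1' ch dir v} : ch ∉ cs →
      Step c1 s1 (some (.comm ch dir v)) c1' s1' →
      Step (.par c1 c2 cs) (.pair s1 s2) (some (.comm ch dir v))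
        (.par c1' c2 cs) (.pair s1' s2)
  | parUnpairS2 {c1 c2 cs s1 s2 c2' s2' ch dir v} : ch ∉ cs →
      Step c2 s2 (some (.comm ch dir v)) c2' s2' →
      Step (.par c1 c2 cs) (.pair s1 s2) (some (.comm ch dir v))
        (.par c1 c2' cs) (.pair s1 s2')

/-! A wait transition is cut at `d'` by induction on its derivation. For the ODE and interrupt
rules the first part restricts the solution to `[0, d')` and the second restarts the ODE at
`p d'` with the shifted solution `p (· + d')`, which is again a solution since the system is
autonomous; the constant waits of input and output split trivially, and the composite rules
split their premises. -/

theorem Solution.comp_add_const {f : SState → String → ℝ} {p : ℝ → SState}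
    (hp : Solution f p) (a : ℝ) : Solution f (fun t => p (t + a)) :=
  fun x t => (hp x (t + a)).comp_add_const t a

section WaitResume

variable {f : SState → String → ℝ} {B : SState → Prop} {p : ℝ → SState} {a d : ℝ}

theorem Step.ode_wait_resume (hp : Solution f p) (ha : 0 ≤ a) (had : a < d)
    (hB : ∀ t, 0 ≤ t → t < d → B (p t)) :
    Step (.ode f B) (.base (p a)) (some (.wait (d - a) (fun t => .base (p (t + a))) ∅))
      (.ode f B) (.base (p d)) := by
  simpa only [zero_add, sub_add_cancel] using Step.contS2 (B := B) (hp.comp_add_const a) rfl (sub_pos.2 had)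
    fun t ht htd => hB (t + a) (by linarith) (by linarith)

theorem Step.interrupt_wait_resume {comms : List (CommDir × SProc)} (hp : Solution f p)
    (ha : 0 ≤ a) (had : a < d) (hB : ∀ t, 0 ≤ t → t < d → B (p t)) :
    Step (.interrupt f B comms) (.base (p a))
      (some (.wait (d - a) (fun t => .base (p (t + a))) (rdyOf comms)))
      (.interrupt f B comms) (.base (p d)) := by
  simpa only [zero_add, sub_add_cancel] using Step.intS1 (B := B) (comms := comms) (hp.comp_add_const a) rfl
    (sub_pos.2 had) fun t ht htd => hB (t + a) (by linarith) (by linarith)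

end WaitResume

/-- Splitting of small-step continuous transitions: if `(c, s)` makes a
small-step transition with wait event `⟨d, p, rdy⟩` to `(c', s')` and
`0 < d' < d`, then there are `c''`, `s''` with a wait transition
`⟨d', p, rdy⟩` from `(c, s)` to `(c'', s'')` followed by a wait transition
`⟨d − d', p(·+d'), rdy⟩` from `(c'', s'')` to `(c', s')`. -/
theorem step_wait_split (c c' : SProc) (s s' : PState) (d d' : ℝ)
    (p : ℝ → PState) (rdy : Set RdyEv)
    (h : Step c s (some (Ev.wait d p rdy)) c' s')
    (h0 : 0 < d') (hd : d' < d) :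
    ∃ c'' s'',
      Step c s (some (Ev.wait d' p rdy)) c'' s'' ∧
      Step c'' s'' (some (Ev.wait (d - d') (fun t => p (t + d')) rdy)) c' s' := by
  generalize hev : some (Ev.wait d p rdy) = ev at h
  induction h generalizing d p rdy with
  | seqS1 _ ih =>
    obtain ⟨_, _, h₁, h₂⟩ := ih _ _ _ hd hev
    exact ⟨_, _, .seqS1 h₁, .seqS1 h₂⟩
  | repS2 _ ih =>
    obtain ⟨_, _, h₁, h₂⟩ := ih _ _ _ hd hev
    exact ⟨_, _, .repS2 h₁, .seqS1 h₂⟩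
  | outS2 =>
    cases hev
    exact ⟨_, _, .outS2 h0, .outS2 (sub_pos.2 hd)⟩
  | inS2 =>
    cases hev
    exact ⟨_, _, .inS2 h0, .inS2 (sub_pos.2 hd)⟩
  | contS2 hp hp0 _ hB =>
    cases hev
    exact ⟨_, _, .contS2 hp hp0 h0 fun t ht _ => hB t ht (by linarith),
      .ode_wait_resume hp h0.le hd hB⟩
  | intS1 hp hp0 _ hB =>
    cases hev
    exact ⟨_, _, .intS1 hp hp0 h0 fun t ht _ => hB t ht (by linarith),
      .interrupt_wait_resume hp h0.le hd hB⟩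
  | parDelayS hcompat _ _ ih₁ ih₂ =>
    cases hev
    obtain ⟨_, _, h₁₁, h₁₂⟩ := ih₁ _ _ _ hd rfl
    obtain ⟨_, _, h₂₁, h₂₂⟩ := ih₂ _ _ _ hd rfl
    exact ⟨_, _, .parDelayS hcompat h₁₁ h₂₁, .parDelayS hcompat h₁₂ h₂₂⟩
  | _ => cases hev
end

section
/- Soundness of the parallel rule: if ⊨ {P1} c1 {Q1} and ⊨ {P2} c2 {Q2}, then ⊨ {P1[ε/γ] ∧ P2[ε/γ]} c1 ∥_cs c2 {∃tr1 tr2. Q1[tr1/γ] ∧ Q2[tr2/γ] ∧ tr1 ∥_cs tr2 ⇓ γ}, where the trace variable γ denotes the accumulated trace, states of the parallel process are disjoint unions s1 ⊎ s2 of component states, and the big-step semantics of c1 ∥_cs c2 from s1 ⊎ s2 is: (c1,s1) ⇒ (s1',tr1), (c2,s2) ⇒ (s2',tr2), tr1 ∥_cs tr2 ⇓ tr give (c1∥_cs c2, s1⊎s2) ⇒ (s1'⊎s2', tr). -/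
set_option autoImplicit true

/-- Ready-set elements whose channel belongs to `cs`. -/
def csRdy (cs : Set String) : Set RdyEv :=
  { r | ∃ ch ∈ cs, r = RdyEv.rin ch ∨ r = RdyEv.rout ch }

/-- Trace synchronization `tr1 ∥_cs tr2 ⇓ tr`. -/
inductive Sync (cs : Set String) : List Ev → List Ev → List Ev → Prop
  | syncIO {ch v tr1 tr2 tr} : ch ∈ cs → Sync cs tr1 tr2 tr →
      Sync cs (.comm ch .outp v :: tr1) (.comm ch .inp v :: tr2) (.comm ch .io v :: tr)
  | syncIO' {ch v tr1 tr2 tr} : ch ∈ cs → Sync cs tr1 tr2 tr →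
      Sync cs (.comm ch .inp v :: tr1) (.comm ch .outp v :: tr2) (.comm ch .io v :: tr)
  | noSyncIO {ch dir v tr1 tr2 tr} : ch ∉ cs → Sync cs tr1 tr2 tr →
      Sync cs (.comm ch dir v :: tr1) tr2 (.comm ch dir v :: tr)
  | noSyncIO' {ch dir v tr1 tr2 tr} : ch ∉ cs → Sync cs tr1 tr2 tr →
      Sync cs tr1 (.comm ch dir v :: tr2) (.comm ch dir v :: tr)
  | syncEmpty1 {ch dir v tr1} : ch ∈ cs →
      Sync cs (.comm ch dir v :: tr1) [] [.delta]
  | syncEmpty1' {ch dir v tr2} : ch ∈ cs →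
      Sync cs [] (.comm ch dir v :: tr2) [.delta]
  | syncEmpty2 {d p rdy tr1 tr} : Sync cs tr1 [] tr →
      Sync cs (.wait d p rdy :: tr1) [] (.wait d p rdy :: tr)
  | syncEmpty2' {d p rdy tr2 tr} : Sync cs [] tr2 tr →
      Sync cs [] (.wait d p rdy :: tr2) (.wait d p rdy :: tr)
  | syncEmpty3 : Sync cs [] [] []
  | syncWait1 {d p1 p2 rdy1 rdy2 tr1 tr2 tr} :
      compat rdy1 rdy2 → 0 < d → Sync cs tr1 tr2 tr →
      Sync cs (.wait d p1 rdy1 :: tr1) (.wait d p2 rdy2 :: tr2)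
        (.wait d (fun t => .pair (p1 t) (p2 t)) ((rdy1 ∪ rdy2) \ csRdy cs) :: tr)
  | syncWait2 {d1 d2 p1 p2 rdy1 rdy2 tr1 tr2 tr} :
      d2 < d1 → 0 < d2 → compat rdy1 rdy2 →
      Sync cs (.wait (d1 - d2) (fun t => p1 (t + d2)) rdy1 :: tr1) tr2 tr →
      Sync cs (.wait d1 p1 rdy1 :: tr1) (.wait d2 p2 rdy2 :: tr2)
        (.wait d2 (fun t => .pair (p1 t) (p2 t)) ((rdy1 ∪ rdy2) \ csRdy cs) :: tr)
  | syncWait2' {d1 d2 p1 p2 rdy1 rdy2 tr1 tr2 tr} :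
      d1 < d2 → 0 < d1 → compat rdy1 rdy2 →
      Sync cs tr1 (.wait (d2 - d1) (fun t => p2 (t + d1)) rdy2 :: tr2) tr →
      Sync cs (.wait d1 p1 rdy1 :: tr1) (.wait d2 p2 rdy2 :: tr2)
        (.wait d1 (fun t => .pair (p1 t) (p2 t)) ((rdy1 ∪ rdy2) \ csRdy cs) :: tr)

/-- Big-step operational semantics `(c, s) ⇒ (s', tr)`. -/
inductive Big : SProc → PState → PState → List Ev → Prop
  | skipB {s} : Big .skip s s []
  | assignB {x e s} :
      Big (.assign x e) (.base s) (.base (update s x (e s))) []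
  | outB1 {ch e s} :
      Big (.output ch e) (.base s) (.base s) [.comm ch .outp (e s)]
  | outB2 {ch e s d} : 0 < d →
      Big (.output ch e) (.base s) (.base s)
        [.wait d (fun _ => .base s) {RdyEv.rout ch}, .comm ch .outp (e s)]
  | outB3 {ch e s} :
      Big (.output ch e) (.base s) (.base s)
        [.waitInf (fun _ => .base s) {RdyEv.rout ch}]
  | inB1 {ch x s v} :
      Big (.input ch x) (.base s) (.base (update s x v)) [.comm ch .inp v]
  | inB2 {ch x s v d} : 0 < d →
      Big (.input ch x) (.base s) (.base (update s x v))
        [.wait d (fun _ => .base s) {RdyEv.rin ch}, .comm ch .inp v]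
  | inB3 {ch x s} :
      Big (.input ch x) (.base s) (.base s)
        [.waitInf (fun _ => .base s) {RdyEv.rin ch}]
  | repB1 {c s} : Big (.star c) s s []
  | repB2 {c s s1 s2 tr1 tr2} : Big c s s1 tr1 → Big (.star c) s1 s2 tr2 →
      Big (.star c) s s2 (tr1 ++ tr2)
  | condB1 {b c1 c2 s s2 tr} : b s → Big c1 (.base s) s2 tr →
      Big (.cond b c1 c2) (.base s) s2 tr
  | condB2 {b c1 c2 s s2 tr} : ¬ b s → Big c2 (.base s) s2 tr →
      Big (.cond b c1 c2) (.base s) s2 tr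
  | ichoiceB1 {c1 c2 s s2 tr} : Big c1 s s2 tr → Big (.ichoice c1 c2) s s2 tr
  | ichoiceB2 {c1 c2 s s2 tr} : Big c2 s s2 tr → Big (.ichoice c1 c2) s s2 tr
  | seqB {c1 c2 s1 s2 s3 tr1 tr2} : Big c1 s1 s2 tr1 → Big c2 s2 s3 tr2 →
      Big (.seq c1 c2) s1 s3 (tr1 ++ tr2)
  | contB1 {f B s} : ¬ B s → Big (.ode f B) (.base s) (.base s) []
  | contB2 {f B s p d} : Solution f p → p 0 = s → 0 < d →
      (∀ t, 0 ≤ t → t < d → B (p t)) → ¬ B (p d) →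
      Big (.ode f B) (.base s) (.base (p d)) [.wait d (fun t => .base (p t)) ∅]
  | intB1 {f B comms s s2 tr ch e ci} : (CommDir.send ch e, ci) ∈ comms →
      Big ci (.base s) s2 tr →
      Big (.interrupt f B comms) (.base s) s2 (.comm ch .outp (e s) :: tr)
  | intB2 {f B comms s s2 tr ch e ci p d} :
      Solution f p → p 0 = s → 0 < d → (∀ t, 0 ≤ t → t < d → B (p t)) →
      (CommDir.send ch e, ci) ∈ comms → Big ci (.base (p d)) s2 tr →
      Big (.interrupt f B comms) (.base s) s2
        (.wait d (fun t => .base (p t)) (rdyOf comms) ::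
          .comm ch .outp (e (p d)) :: tr)
  | intB3 {f B comms s s2 tr ch x ci v} : (CommDir.recv ch x, ci) ∈ comms →
      Big ci (.base (update s x v)) s2 tr →
      Big (.interrupt f B comms) (.base s) s2 (.comm ch .inp v :: tr)
  | intB4 {f B comms s s2 tr ch x ci v p d} :
      Solution f p → p 0 = s → 0 < d → (∀ t, 0 ≤ t → t < d → B (p t)) →
      (CommDir.recv ch x, ci) ∈ comms →
      Big ci (.base (update (p d) x v)) s2 tr →
      Big (.interrupt f B comms) (.base s) s2
        (.wait d (fun t => .base (p t)) (rdyOf comms) :: .comm ch .inp v :: tr)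
  | intB5 {f B comms s} : ¬ B s →
      Big (.interrupt f B comms) (.base s) (.base s) []
  | intB6 {f B comms s p d} : Solution f p → p 0 = s → 0 < d →
      (∀ t, 0 ≤ t → t < d → B (p t)) → ¬ B (p d) →
      Big (.interrupt f B comms) (.base s) (.base (p d))
        [.wait d (fun t => .base (p t)) (rdyOf comms)]
  | parB {c1 c2 cs s1 s2 s1' s2' tr1 tr2 tr} :
      Big c1 s1 s1' tr1 → Big c2 s2 s2' tr2 → Sync cs tr1 tr2 tr →
      Big (.par c1 c2 cs) (.pair s1 s2) (.pair s1' s2') tr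

/-- Assertions: predicates over pairs of a state and a trace. -/
abbrev Assn := PState → List Ev → Prop

/-- Validity of a Hoare triple `{P} c {Q}`: for all `(s1, h1)` satisfying `P`
and every big-step execution `(c, s1) ⇒ (s2, h2)`, the pair `(s2, h1⌢h2)`
satisfies `Q`. -/
def Valid (P : Assn) (c : SProc) (Q : Assn) : Prop :=
  ∀ s1 h1, P s1 h1 → ∀ s2 h2, Big c s1 s2 h2 → Q s2 (h1 ++ h2)

/-- Soundness of the parallel rule: from `⊨ {P1} c1 {Q1}` and
`⊨ {P2} c2 {Q2}` we get
`⊨ {P1[ε/γ] ∧ P2[ε/γ]} c1 ∥_cs c2 {∃ tr1 tr2. Q1[tr1/γ] ∧ Q2[tr2/γ] ∧ tr1 ∥_cs tr2 ⇓ γ}`,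
where `P1`, `Q1` (resp. `P2`, `Q2`) are assertions on the state of `c1`
(resp. `c2`), and a state of `c1 ∥_cs c2` is a disjoint union `s1 ⊎ s2`. -/
theorem par_sound (P1 P2 Q1 Q2 : Assn) (c1 c2 : SProc) (cs : Set String)
    (h1 : Valid P1 c1 Q1) (h2 : Valid P2 c2 Q2) :
    Valid
      (fun s h => ∃ s1 s2, s = PState.pair s1 s2 ∧
        P1 s1 [] ∧ P2 s2 [] ∧ h = [])
      (SProc.par c1 c2 cs)
      (fun s h => ∃ s1 s2, s = PState.pair s1 s2 ∧
        ∃ tr1 tr2, Q1 s1 tr1 ∧ Q2 s2 tr2 ∧ Sync cs tr1 tr2 h) := by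
  rintro s h ⟨s1, s2, rfl, hp1, hp2, rfl⟩ s' h' hb
  cases hb with
  | parB hb1 hb2 hs =>
    exact ⟨_, _, rfl, _, _, h1 _ _ hp1 _ _ hb1, h2 _ _ hp2 _ _ hb2, hs⟩
end

section
/- Uniform convergence of the piecewise-linear Euler interpolant: let p : [0, T] → ℝⁿ be a C² solution of ẋ = e(x) with p(0) = x₀ and Lipschitz constant L for e. Define the continuous approximation f_h : [0, T] → ℝⁿ by f_h((i+t)h) = x_i + (x_{i+1} − x_i)·t for integer i ≥ 0 and 0 ≤ t < 1, where x_{i+1} = x_i + h·e(x_i). Then for every ε > 0 there exists h₀ > 0 such that for all 0 < h < h₀ and all t ∈ [0, T], ‖p(t) − f_h(t)‖ < ε. -/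
open Set

/-- Euler iterates `x_{k+1} = x_k + h • e(x_k)` starting at `x₀`. -/
noncomputable def euler {n : ℕ} (e : EuclideanSpace ℝ (Fin n) → EuclideanSpace ℝ (Fin n))
    (x0 : EuclideanSpace ℝ (Fin n)) (h : ℝ) : ℕ → EuclideanSpace ℝ (Fin n)
  | 0 => x0
  | k + 1 => euler e x0 h k + h • e (euler e x0 h k)

/-- The piecewise-linear interpolant of the Euler iterates:
`f_h((i + t)·h) = x_i + t • (x_{i+1} − x_i)` for integers `i ≥ 0` and
`0 ≤ t < 1`. -/
noncomputable def eulerInterp {n : ℕ}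
    (e : EuclideanSpace ℝ (Fin n) → EuclideanSpace ℝ (Fin n))
    (x0 : EuclideanSpace ℝ (Fin n)) (h : ℝ) (t : ℝ) : EuclideanSpace ℝ (Fin n) :=
  let i : ℕ := ⌊t / h⌋₊
  euler e x0 h i + ((t - (i : ℝ) * h) / h) • (euler e x0 h (i + 1) - euler e x0 h i)

/-! The interpolant `f_h` is continuous, and on `[i h, (i + 1) h)` it has right derivative
`e(x_i)`, which differs from `e(f_h(t))` by at most `L h ‖e(x_i)‖` since `‖f_h(t) - x_i‖ ≤ h ‖e(x_i)‖`.
The Euler recursion gives `‖e(x_{i+1})‖ ≤ (1 + L h) ‖e(x_i)‖`, hence `‖e(x_i)‖ ≤ e^{L T} ‖e(x₀)‖`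
for `i h ≤ T`. So `f_h` is an `O(h)`-approximate solution of `ẋ = e(x)` with the same initial value
as `p`, and Grönwall's inequality bounds `‖p - f_h‖` on `[0, T]` by a quantity that is `O(h)`. -/

open Filter Topology NNReal

section LinearInterp

variable {E : Type*} [NormedAddCommGroup E] [NormedSpace ℝ E] (x : ℕ → E)

noncomputable def linearInterp (u : ℝ) : E :=
  x ⌊u⌋₊ + (u - ⌊u⌋₊) • (x (⌊u⌋₊ + 1) - x ⌊u⌋₊)

theorem linearInterp_eq_of_mem_Icc {i : ℕ} {u : ℝ} (hu : u ∈ Icc (i : ℝ) (i + 1)) :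
    linearInterp x u = x i + (u - i) • (x (i + 1) - x i) := by
  rcases hu.2.lt_or_eq with hlt | rfl
  · rw [linearInterp, (Nat.floor_eq_iff (hu.1.trans' i.cast_nonneg)).2 ⟨hu.1, hlt⟩]
  · rw [linearInterp, ← Nat.cast_succ, Nat.floor_natCast]
    simp

theorem continuousOn_linearInterp : ContinuousOn (linearInterp x) (Ici 0) := by
  have hcover : (⋃ i : ℕ, Icc (i : ℝ) (i + 1)) = Ici 0 := by
    ext u
    simp only [mem_iUnion, mem_Icc, mem_Ici]
    refine ⟨fun ⟨i, hi, _⟩ => i.cast_nonneg.trans hi, fun hu => ?_⟩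
    exact ⟨⌊u⌋₊, Nat.floor_le hu, (Nat.lt_floor_add_one u).le⟩
  have hfin : LocallyFinite (fun i : ℕ => Icc (i : ℝ) (i + 1)) :=
    (locallyFinite_Icc_of_tendsto (f := fun i : ℤ => (i : ℝ)) (g := fun i : ℤ => (i : ℝ) + 1)
      tendsto_intCast_atTop_atTop
      (tendsto_atBot_add_const_right _ _ (tendsto_intCast_atBot_iff.2 tendsto_id))).comp_injective
      Nat.cast_injective
  rw [← hcover]
  refine hfin.continuousOn_iUnion (fun _ => isClosed_Icc) fun i => ?_
  exact ContinuousOn.congr (by fun_prop) fun u hu => linearInterp_eq_of_mem_Icc x hu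

theorem hasDerivWithinAt_linearInterp {u : ℝ} (hu : 0 ≤ u) :
    HasDerivWithinAt (linearInterp x) (x (⌊u⌋₊ + 1) - x ⌊u⌋₊) (Ici u) u := by
  set i := ⌊u⌋₊
  have hmem : ∀ v ∈ Ico u (i + 1), v ∈ Icc (i : ℝ) (i + 1) := fun v hv =>
    ⟨(Nat.floor_le hu).trans hv.1, hv.2.le⟩
  have haff : HasDerivAt (fun v : ℝ => x i + (v - i) • (x (i + 1) - x i)) (x (i + 1) - x i) u := by
    simpa using (((hasDerivAt_id u).sub_const (i : ℝ)).smul_const (x (i + 1) - x i)).const_add (x i)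
  refine haff.hasDerivWithinAt.congr_of_eventuallyEq ?_
    (linearInterp_eq_of_mem_Icc x (hmem u ⟨le_rfl, Nat.lt_floor_add_one u⟩))
  filter_upwards [Ico_mem_nhdsGE (Nat.lt_floor_add_one u)] with v hv
  exact linearInterp_eq_of_mem_Icc x (hmem v hv)

theorem norm_linearInterp_sub_le {u : ℝ} (hu : 0 ≤ u) :
    ‖linearInterp x u - x ⌊u⌋₊‖ ≤ ‖x (⌊u⌋₊ + 1) - x ⌊u⌋₊‖ := by
  have h0 : 0 ≤ u - ⌊u⌋₊ := sub_nonneg.2 (Nat.floor_le hu)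
  have h1 : u - ⌊u⌋₊ ≤ 1 := by linarith [Nat.lt_floor_add_one u]
  rw [linearInterp, add_sub_cancel_left, norm_smul, Real.norm_of_nonneg h0]
  exact mul_le_of_le_one_left (norm_nonneg _) h1

end LinearInterp

section Euler

variable {n : ℕ} {e : EuclideanSpace ℝ (Fin n) → EuclideanSpace ℝ (Fin n)}
  {x0 : EuclideanSpace ℝ (Fin n)} {h : ℝ}

theorem euler_succ_sub (k : ℕ) : euler e x0 h (k + 1) - euler e x0 h k = h • e (euler e x0 h k) :=
  add_sub_cancel_left _ _

theorem eulerInterp_eq_linearInterp (hh : h ≠ 0) (t : ℝ) :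
    eulerInterp e x0 h t = linearInterp (euler e x0 h) (t / h) := by
  simp only [eulerInterp, linearInterp]
  congr 2
  field_simp

theorem norm_apply_euler_le {K : ℝ≥0} (hLip : LipschitzWith K e) (hh : 0 ≤ h) (k : ℕ) :
    ‖e (euler e x0 h k)‖ ≤ Real.exp (K * (k * h)) * ‖e x0‖ := by
  induction k with
  | zero => simp [euler]
  | succ k ih =>
    have hstep : ‖e (euler e x0 h (k + 1))‖ ≤ (1 + K * h) * ‖e (euler e x0 h k)‖ := by
      have := hLip.norm_sub_le (euler e x0 h (k + 1)) (euler e x0 h k)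
      rw [euler_succ_sub, norm_smul, Real.norm_of_nonneg hh] at this
      linarith [norm_le_norm_add_norm_sub' (e (euler e x0 h (k + 1))) (e (euler e x0 h k))]
    calc ‖e (euler e x0 h (k + 1))‖ ≤ (1 + K * h) * ‖e (euler e x0 h k)‖ := hstep
      _ ≤ Real.exp (K * h) * (Real.exp (K * (k * h)) * ‖e x0‖) := by
        gcongr
        linarith [Real.add_one_le_exp (K * h)]
      _ = Real.exp (K * ((k + 1 : ℕ) * h)) * ‖e x0‖ := by
        rw [← mul_assoc, ← Real.exp_add]; push_cast; ring_nf

variable (hh : 0 < h)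
include hh

theorem continuousOn_eulerInterp : ContinuousOn (eulerInterp e x0 h) (Ici 0) := by
  rw [funext (eulerInterp_eq_linearInterp hh.ne')]
  exact (continuousOn_linearInterp _).comp (continuousOn_id.div_const h)
    fun t ht => div_nonneg ht hh.le

theorem hasDerivWithinAt_eulerInterp {t : ℝ} (ht : 0 ≤ t) :
    HasDerivWithinAt (eulerInterp e x0 h) (e (euler e x0 h ⌊t / h⌋₊)) (Ici t) t := by
  rw [funext (eulerInterp_eq_linearInterp hh.ne')]
  have := (hasDerivWithinAt_linearInterp (euler e x0 h) (div_nonneg ht hh.le)).scomp t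
    ((hasDerivAt_id t).div_const h).hasDerivWithinAt
    fun s hs => div_le_div_of_nonneg_right hs hh.le
  rwa [euler_succ_sub, smul_smul, one_div_mul_cancel hh.ne', one_smul] at this

theorem norm_eulerInterp_sub_euler_le {t : ℝ} (ht : 0 ≤ t) :
    ‖eulerInterp e x0 h t - euler e x0 h ⌊t / h⌋₊‖ ≤ h * ‖e (euler e x0 h ⌊t / h⌋₊)‖ := by
  have := norm_linearInterp_sub_le (euler e x0 h) (div_nonneg ht hh.le)
  rwa [← eulerInterp_eq_linearInterp hh.ne', euler_succ_sub, norm_smul,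
    Real.norm_of_nonneg hh.le] at this

theorem dist_le_gronwallBound_eulerInterp {p : ℝ → EuclideanSpace ℝ (Fin n)} {T : ℝ} {K : ℝ≥0}
    (hLip : LipschitzWith K e) (hp0 : p 0 = x0)
    (hsol : ∀ t ∈ Icc (0 : ℝ) T, HasDerivAt p (e (p t)) t) :
    ∀ t ∈ Icc (0 : ℝ) T, dist (p t) (eulerInterp e x0 h t) ≤
      gronwallBound 0 K (h * (K * (Real.exp (K * T) * ‖e x0‖))) T := by
  have hdefect : ∀ s ∈ Ico (0 : ℝ) T, dist (e (euler e x0 h ⌊s / h⌋₊)) (e (eulerInterp e x0 h s))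
      ≤ h * (K * (Real.exp (K * T) * ‖e x0‖)) := by
    intro s hs
    have hgrid : (⌊s / h⌋₊ : ℝ) * h ≤ T :=
      ((le_div_iff₀ hh).1 (Nat.floor_le (div_nonneg hs.1 hh.le))).trans hs.2.le
    calc dist (e (euler e x0 h ⌊s / h⌋₊)) (e (eulerInterp e x0 h s))
        ≤ K * ‖eulerInterp e x0 h s - euler e x0 h ⌊s / h⌋₊‖ := by
          rw [← dist_eq_norm, dist_comm]; exact hLip.dist_le_mul _ _
      _ ≤ K * (h * ‖e (euler e x0 h ⌊s / h⌋₊)‖) := by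
          gcongr; exact norm_eulerInterp_sub_euler_le hh hs.1
      _ ≤ K * (h * (Real.exp (K * T) * ‖e x0‖)) := by
          gcongr
          exact (norm_apply_euler_le hLip hh.le _).trans (by gcongr)
      _ = h * (K * (Real.exp (K * T) * ‖e x0‖)) := by ring
  intro t ht
  have := dist_le_of_approx_trajectories_ODE (v := fun _ => e) (δ := 0) (fun _ => hLip)
    (fun s hs => (hsol s hs).continuousAt.continuousWithinAt)
    (fun s hs => (hsol s (Ico_subset_Icc_self hs)).hasDerivWithinAt)
    (fun s _ => (dist_self _).le)
    ((continuousOn_eulerInterp hh).mono fun s hs => hs.1)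
    (fun s hs => hasDerivWithinAt_eulerInterp hh hs.1) hdefect
    (by simp [hp0, eulerInterp, euler]) t ht
  rw [zero_add, sub_zero] at this
  exact this.trans (gronwallBound_mono le_rfl (by positivity) K.2 ht.2)

end Euler

theorem euler_interp_uniform_convergence_general {n : ℕ}
    (e : EuclideanSpace ℝ (Fin n) → EuclideanSpace ℝ (Fin n))
    (p : ℝ → EuclideanSpace ℝ (Fin n)) (x0 : EuclideanSpace ℝ (Fin n))
    (T L : ℝ)
    (hLip : LipschitzWith (Real.toNNReal L) e)
    (hp0 : p 0 = x0)
    (hsol : ∀ t ∈ Icc (0:ℝ) T, HasDerivAt p (e (p t)) t) :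
    ∀ ε > (0:ℝ), ∃ h₀ > (0:ℝ), ∀ h, 0 < h → h < h₀ →
      ∀ t ∈ Icc (0:ℝ) T, ‖p t - eulerInterp e x0 h t‖ < ε := by
  intro ε hε
  set K := Real.toNNReal L
  set C := (K : ℝ) * (Real.exp (K * T) * ‖e x0‖)
  have hlim : Tendsto (fun h => gronwallBound 0 K (h * C) T) (𝓝 0) (𝓝 0) :=
    ((gronwallBound_continuous_ε 0 K T).comp (continuous_mul_const C)).tendsto' 0 0
      (by simp [gronwallBound_ε0_δ0])
  obtain ⟨h₀, hh₀, hsmall⟩ := Metric.tendsto_nhds_nhds.1 hlim ε hε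
  refine ⟨h₀, hh₀, fun h hh hlt t ht => ?_⟩
  have hbound := hsmall (by rwa [Real.dist_0_eq_abs, abs_of_pos hh])
  rw [Real.dist_0_eq_abs] at hbound
  rw [← dist_eq_norm]
  exact (dist_le_gronwallBound_eulerInterp hh hLip hp0 hsol t ht).trans_lt
    ((le_abs_self _).trans_lt hbound)

/-- Uniform convergence of the piecewise-linear Euler interpolant: if `p` is
a C² solution of `ẋ = e(x)` with `p(0) = x₀` and `e` is Lipschitz with
constant `L`, then for every `ε > 0` there is `h₀ > 0` such that for all
`0 < h < h₀` and all `t ∈ [0, T]`, `‖p(t) − f_h(t)‖ < ε`. -/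
theorem euler_interp_uniform_convergence {n : ℕ}
    (e : EuclideanSpace ℝ (Fin n) → EuclideanSpace ℝ (Fin n))
    (p : ℝ → EuclideanSpace ℝ (Fin n)) (x0 : EuclideanSpace ℝ (Fin n))
    (T L : ℝ) (hT : 0 < T) (hL : 0 < L)
    (hLip : LipschitzWith (Real.toNNReal L) e)
    (hp0 : p 0 = x0)
    (hsol : ∀ t ∈ Icc (0:ℝ) T, HasDerivAt p (e (p t)) t)
    (hC2 : ContDiff ℝ 2 p) :
    ∀ ε > (0:ℝ), ∃ h₀ > (0:ℝ), ∀ h, 0 < h → h < h₀ →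
      ∀ t ∈ Icc (0:ℝ) T, ‖p t - eulerInterp e x0 h t‖ < ε :=
  euler_interp_uniform_convergence_general e p x0 T L hLip hp0 hsol
end
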